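/- arXiv:math/0405594 — 3 statements merged into one kernel-verified Lean document; each statement's English description precedes it below -/
import Mathlib

section
/- The arctanh numbers satisfy the recurrence θ(n+1,m) = θ(n,m-1) + n(n-1)·θ(n-1,m) for n ≥ 1, m ≥ 1, with θ(0,m) = [m=0] and θ(n,0) = [n=0]. -/
/-! Since `arctanh' = 1 / (1 - u²)`, the series `F_m = arctanh(u)^m / m!` satisfy
`(1 - u²) F_m' = F_{m-1}`. Reading off the coefficient of `uⁿ / n!` on both sides turns the
factor `1 - u²` into the two terms `θ(n+1,m) - n(n-1) θ(n-1,m)` and the right side into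
`θ(n,m-1)`. -/

open PowerSeries Finset

/-- Unsigned Lah numbers: `L(n,m) = (n!/m!) * C(n-1,m-1)` for `n ≥ m ≥ 1`, else `0`. -/
noncomputable def lahN (n m : ℕ) : ℚ :=
  if 1 ≤ m ∧ m ≤ n then (n.factorial : ℚ) / (m.factorial : ℚ) * ((n - 1).choose (m - 1) : ℚ)
  else 0

/-- Unsigned Stirling numbers of the first kind (permutations of `n` with `m` cycles). -/
def stirling1 : ℕ → ℕ → ℕ
  | 0, 0 => 1
  | 0, _ + 1 => 0
  | _ + 1, 0 => 0
  | n + 1, m + 1 => n * stirling1 n (m + 1) + stirling1 n m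

/-- Stirling numbers of the second kind. -/
def stirling2 : ℕ → ℕ → ℕ
  | 0, 0 => 1
  | 0, _ + 1 => 0
  | _ + 1, 0 => 0
  | n + 1, m + 1 => (m + 1) * stirling2 n (m + 1) + stirling2 n m

noncomputable def tanhS : PowerSeries ℚ :=
  (PowerSeries.exp ℚ - PowerSeries.rescale (-1) (PowerSeries.exp ℚ)) *
    (PowerSeries.exp ℚ + PowerSeries.rescale (-1) (PowerSeries.exp ℚ))⁻¹

/-- `arctanh u = (1/2) log((1+u)/(1-u)) = ∑_{j≥0} u^{2j+1}/(2j+1)` as a formal power series. -/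
noncomputable def arctanhS : PowerSeries ℚ :=
  PowerSeries.mk fun n => if n % 2 = 1 then (1 : ℚ) / n else 0

/-- Tanh numbers `Θ(n,m)`, defined by `(1/m!) tanh(u)^m = ∑_n Θ(n,m) u^n/n!`. -/
noncomputable def ThetaT (n m : ℕ) : ℚ :=
  (n.factorial : ℚ) / (m.factorial : ℚ) * PowerSeries.coeff n (tanhS ^ m)

/-- Arctanh numbers `θ(n,m)`, defined by `(1/m!) arctanh(u)^m = ∑_n θ(n,m) u^n/n!`. -/
noncomputable def thetaA (n m : ℕ) : ℚ :=
  (n.factorial : ℚ) / (m.factorial : ℚ) * PowerSeries.coeff n (arctanhS ^ m)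

open scoped Nat

theorem factorial_mul_coeff_succ_of_one_sub_X_sq_mul_derivative {R : Type*} [CommRing R]
    {f g : R⟦X⟧} (h : (1 - X ^ 2) * d⁄dX R f = g) (n : ℕ) :
    ((n + 1)! : R) * coeff (n + 1) f =
      n ! * coeff n g + n * (n - 1) * ((n - 1)! * coeff (n - 1) f) := by
  have hn := congrArg (coeff n) h
  rw [sub_mul, one_mul, map_sub, coeff_X_pow_mul', coeff_derivative] at hn
  rw [← hn]
  rcases n with _ | _ | k
  · simp
  · simp [Nat.factorial]
    ring
  · rw [if_pos (by omega), coeff_derivative]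
    simp only [Nat.factorial_succ, Nat.add_sub_cancel, show k + 2 - 2 + 1 = k + 1 by omega]
    push_cast
    ring

theorem one_sub_X_sq_mul_derivative_arctanhS : (1 - X ^ 2) * d⁄dX ℚ arctanhS = 1 := by
  ext n
  rw [sub_mul, one_mul, map_sub, coeff_X_pow_mul', coeff_derivative, coeff_one]
  rcases n with _ | _ | k
  · simp [arctanhS]
  · simp [arctanhS]
  · rw [if_pos (by omega), coeff_derivative]
    simp only [arctanhS, coeff_mk, show k + 2 - 2 + 1 = k + 1 by omega]
    rcases Nat.even_or_odd k with ⟨j, rfl⟩ | ⟨j, rfl⟩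
    · rw [if_pos (by omega), if_pos (by omega)]
      push_cast
      field_simp
      simp
    · rw [if_neg (by omega), if_neg (by omega)]
      simp

theorem constantCoeff_arctanhS : constantCoeff arctanhS = 0 := by
  simp [arctanhS]

theorem mul_derivative_pow_div_factorial {K : Type*} [Field K] [CharZero K]
    {p f : K⟦X⟧} (h : p * d⁄dX K f = 1) (m : ℕ) :
    p * d⁄dX K (((m + 1)! : K)⁻¹ • f ^ (m + 1)) = (m ! : K)⁻¹ • f ^ m := by
  have hc : ((m + 1 : ℕ) : K⟦X⟧) * C ((m + 1)! : K)⁻¹ = C (m ! : K)⁻¹ := by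
    rw [← map_natCast C, ← map_mul, Nat.factorial_succ, Nat.cast_mul, mul_inv,
      mul_inv_cancel_left₀ (Nat.cast_ne_zero.mpr m.succ_ne_zero)]
  rw [Derivation.map_smul, Derivation.leibniz_pow, Nat.add_sub_cancel]
  simp only [smul_eq_C_mul, nsmul_eq_mul, smul_eq_mul]
  linear_combination (C ((m + 1)! : K)⁻¹ * (m + 1 : ℕ) * f ^ m) * h + f ^ m * hc

theorem thetaA_eq_factorial_mul_coeff (n m : ℕ) :
    thetaA n m = n ! * coeff n ((m ! : ℚ)⁻¹ • arctanhS ^ m) := by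
  rw [thetaA, map_smul, smul_eq_mul]
  ring

/-- Recurrence for the arctanh numbers:
θ(n+1,m) = θ(n,m-1) + n(n-1) θ(n-1,m) for n ≥ 1, m ≥ 1,
with θ(0,m) = [m=0] and θ(n,0) = [n=0]. -/
theorem arctanh_numbers_recurrence :
    (∀ n m : ℕ, 1 ≤ n → 1 ≤ m →
      thetaA (n + 1) m = thetaA n (m - 1) + (n : ℚ) * ((n : ℚ) - 1) * thetaA (n - 1) m) ∧
    (∀ m : ℕ, thetaA 0 m = if m = 0 then 1 else 0) ∧
    (∀ n : ℕ, thetaA n 0 = if n = 0 then 1 else 0) := by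
  refine ⟨fun n m _ hm => ?_, fun m => ?_, fun n => ?_⟩
  · obtain ⟨m, rfl⟩ : ∃ k, m = k + 1 := ⟨m - 1, by omega⟩
    simp only [thetaA_eq_factorial_mul_coeff, Nat.add_sub_cancel]
    exact factorial_mul_coeff_succ_of_one_sub_X_sq_mul_derivative
      (mul_derivative_pow_div_factorial one_sub_X_sq_mul_derivative_arctanhS m) n
  · rcases m with _ | m <;> simp [thetaA, coeff_zero_eq_constantCoeff, constantCoeff_arctanhS]
  · rcases n with _ | n <;> simp [thetaA, coeff_one]
end

section
/- For every odd n ≥ 1, ∑_{i=1}^{n} (-1)^{i-1}·i!·2^{n-i}·S(n,i) = (-1)^{(n-1)/2}·T_n, where T_n is the n-th tangent number; for every even n ≥ 2, ∑_{i=1}^{n} (-1)^{i-1}·i!·2^{n-i}·S(n,i) = 0. -/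
open PowerSeries Finset

/-- The tangent numbers, via (-1)^{(n-1)/2} T_n = Θ(n,1), i.e. tanh u = ∑_n Θ(n,1) u^n/n!. -/
noncomputable def tangentNumber (n : ℕ) : ℚ := (-1 : ℚ) ^ ((n - 1) / 2) * ThetaT n 1

/-! With `B = e^u - 1` one has `n! [u^n] B^i = i! S(n,i)` (differentiate `B^(i+1)` and compare with
the recurrence of `S`), and `A = e^{2u} - 1` is `B(2u)`. Now `tanh u = A / (A + 2) = 1 - (1 + A/2)⁻¹
= -∑_{i ≥ 1} (-A/2)^i`, and since `A^i = O(u^i)` only the terms `i ≤ n` reach `u^n`; this gives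
`n! [u^n] tanh u = ∑_{i=1}^n (-1)^{i-1} 2^{n-i} i! S(n,i)`. The even coefficients vanish because
`tanh` is odd, and for odd `n` the two signs `(-1)^{(n-1)/2}` cancel. -/

open Nat

@[simp]
theorem constantCoeff_rescale {R : Type*} [CommSemiring R] (a : R) (f : R⟦X⟧) :
    constantCoeff (rescale a f) = constantCoeff f := by
  rw [← coeff_zero_eq_constantCoeff_apply, coeff_rescale, pow_zero, one_mul,
    coeff_zero_eq_constantCoeff_apply]

section ExpSubOnePow

variable {A : Type*} [CommRing A] [Algebra ℚ A]

theorem derivative_exp_sub_one_pow_succ (k : ℕ) :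
    d⁄dX A ((exp A - 1) ^ (k + 1)) =
      (k + 1 : A) • ((exp A - 1) ^ (k + 1) + (exp A - 1) ^ k) := by
  rw [Derivation.leibniz_pow, map_sub, derivative_exp, Derivation.map_one_eq_zero, sub_zero,
    Nat.add_sub_cancel, smul_eq_mul, ← Nat.cast_smul_eq_nsmul A]
  push_cast
  congr 1
  ring

theorem factorial_mul_coeff_exp_sub_one_pow (n k : ℕ) :
    (n ! : A) * coeff n ((exp A - 1) ^ k) = k ! * stirling2 n k := by
  induction n generalizing k with
  | zero => cases k <;> simp [stirling2]
  | succ n ih =>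
    cases k with
    | zero => simp [stirling2, coeff_one]
    | succ k =>
      have hd := coeff_derivative ((exp A - 1) ^ (k + 1)) n
      rw [derivative_exp_sub_one_pow_succ, coeff_smul, map_add] at hd
      have ih₁ := ih (k + 1)
      have ih₂ := ih k
      simp only [stirling2, factorial_succ] at ih₁ ⊢
      push_cast at ih₁ ih₂ ⊢
      linear_combination (n ! : A) * hd.symm + ((k : A) + 1) * (ih₁ + ih₂)

end ExpSubOnePow

section Field

variable {k : Type*} [Field k]

theorem coeff_inv_one_add {g : k⟦X⟧} (hg : constantCoeff g = 0) (n : ℕ) :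
    coeff n (1 + g)⁻¹ = ∑ i ∈ range (n + 1), coeff n ((-g) ^ i) := by
  have hinv : (1 + g) * (1 + g)⁻¹ = 1 := PowerSeries.mul_inv_cancel _ (by simp [hg])
  have hgeom : (1 + g) * ∑ i ∈ range (n + 1), (-g) ^ i = 1 - (-g) ^ (n + 1) := by
    simpa using mul_neg_geom_sum (-g) (n + 1)
  have htail : (1 + g)⁻¹ - ∑ i ∈ range (n + 1), (-g) ^ i = (-g) ^ (n + 1) * (1 + g)⁻¹ := by
    linear_combination (-(1 + g)⁻¹) * hgeom + (∑ i ∈ range (n + 1), (-g) ^ i) * hinv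
  have hdvd : X ^ (n + 1) ∣ (-g) ^ (n + 1) * (1 + g)⁻¹ :=
    (pow_dvd_pow_of_dvd (X_dvd_iff.2 (by simp [hg])) _).mul_right _
  rw [← map_sum, ← sub_eq_zero, ← map_sub, htail]
  exact X_pow_dvd_iff.1 hdvd n n.lt_succ_self

theorem rescale_inv (a : k) (f : k⟦X⟧) : rescale a f⁻¹ = (rescale a f)⁻¹ := by
  have hc := constantCoeff_rescale a f
  by_cases hf : constantCoeff f = 0
  · rw [PowerSeries.inv_eq_zero.2 hf, map_zero, eq_comm, PowerSeries.inv_eq_zero, hc, hf]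
  · rw [PowerSeries.eq_inv_iff_mul_eq_one (hc ▸ hf), ← map_mul, PowerSeries.inv_mul_cancel _ hf,
      map_one]

theorem coeff_eq_zero_of_rescale_neg_one_eq_neg [CharZero k] {f : k⟦X⟧}
    (hf : rescale (-1) f = -f) {n : ℕ} (hn : Even n) : coeff n f = 0 := by
  have := congrArg (coeff n) hf
  rwa [coeff_rescale, hn.neg_one_pow, one_mul, map_neg, CharZero.eq_neg_self_iff] at this

end Field

theorem one_sub_tanhS : 1 - tanhS = (1 + C (1 / 2 : ℚ) * rescale 2 (exp ℚ - 1))⁻¹ := by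
  have hee : exp ℚ * rescale (-1) (exp ℚ) = 1 := exp_mul_exp_neg_eq_one
  have hD : (exp ℚ + rescale (-1) (exp ℚ)) * (exp ℚ + rescale (-1) (exp ℚ))⁻¹ = 1 :=
    PowerSeries.mul_inv_cancel _ (by norm_num)
  have hc : 2 * C (1 / 2 : ℚ) = 1 := by
    rw [← map_ofNat C 2, ← map_mul]; norm_num
  have hsq : rescale 2 (exp ℚ - 1) = exp ℚ ^ 2 - 1 := by
    rw [map_sub, map_one, exp_pow_eq_rescale_exp]; norm_num
  rw [PowerSeries.eq_inv_iff_mul_eq_one (by simp), hsq, tanhS]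
  set e := exp ℚ
  set e' := rescale (-1 : ℚ) e
  set I := (e + e')⁻¹
  linear_combination (-C (1 / 2 : ℚ) * (e ^ 2 - 1)) * hD + (e * I) * hee +
    (e' * I * (e ^ 2 - 1)) * hc

theorem rescale_neg_one_tanhS : rescale (-1) tanhS = -tanhS := by
  have hinvol : rescale (-1 : ℚ) (rescale (-1) (exp ℚ)) = exp ℚ := by
    rw [rescale_rescale]; norm_num [rescale_one]
  rw [tanhS, map_mul, rescale_inv, map_sub, map_add, hinvol, add_comm (rescale _ _)]
  ring

theorem neg_neg_half_pow_mul_two_pow {i n : ℕ} (hi : 1 ≤ i) (hin : i ≤ n) :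
    -(-1 / 2 : ℚ) ^ i * 2 ^ n = (-1) ^ (i - 1) * 2 ^ (n - i) := by
  obtain ⟨j, rfl⟩ : ∃ j, i = j + 1 := ⟨i - 1, by omega⟩
  obtain ⟨m, rfl⟩ : ∃ m, n = j + 1 + m := ⟨n - (j + 1), by omega⟩
  rw [Nat.add_sub_cancel, Nat.add_sub_cancel_left, pow_add 2, div_pow, pow_succ (-1 : ℚ)]
  field_simp

theorem coeff_tanhS (n : ℕ) :
    coeff n tanhS = ∑ i ∈ Icc 1 n, -(-1 / 2 : ℚ) ^ i * 2 ^ n * coeff n ((exp ℚ - 1) ^ i) := by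
  have h := coeff_inv_one_add (g := C (1 / 2 : ℚ) * rescale 2 (exp ℚ - 1)) (by simp) n
  rw [← one_sub_tanhS, map_sub, range_eq_Ico, sum_eq_sum_Ico_succ_bot n.succ_pos,
    zero_add, Nat.succ_eq_add_one, Ico_add_one_right_eq_Icc, pow_zero] at h
  have hterm (i : ℕ) : coeff n ((-(C (1 / 2 : ℚ) * rescale 2 (exp ℚ - 1))) ^ i) =
      (-1 / 2 : ℚ) ^ i * 2 ^ n * coeff n ((exp ℚ - 1) ^ i) := by
    rw [← neg_mul, ← map_neg, mul_pow, ← map_pow, ← map_pow, coeff_C_mul, coeff_rescale]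
    ring
  simp only [hterm] at h
  simp only [neg_mul, sum_neg_distrib]
  linear_combination -h

theorem sum_stirling2_eq_factorial_mul_coeff_tanhS (n : ℕ) :
    ∑ i ∈ Icc 1 n, (-1 : ℚ) ^ (i - 1) * i ! * 2 ^ (n - i) * stirling2 n i =
      n ! * coeff n tanhS := by
  rw [coeff_tanhS, mul_sum]
  refine sum_congr rfl fun i hi => ?_
  obtain ⟨hi1, hin⟩ := mem_Icc.1 hi
  linear_combination
    (-(-(-1 / 2 : ℚ) ^ i * 2 ^ n)) * factorial_mul_coeff_exp_sub_one_pow (A := ℚ) n i -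
      (i ! * stirling2 n i : ℚ) * neg_neg_half_pow_mul_two_pow hi1 hin

theorem lengyel_type_identity_general (n : ℕ) :
    (Odd n →
      ∑ i ∈ Finset.Icc 1 n, (-1 : ℚ) ^ (i - 1) * (i.factorial : ℚ) * (2 : ℚ) ^ (n - i) *
        (stirling2 n i : ℚ) = (-1 : ℚ) ^ ((n - 1) / 2) * tangentNumber n) ∧
    (Even n →
      ∑ i ∈ Finset.Icc 1 n, (-1 : ℚ) ^ (i - 1) * (i.factorial : ℚ) * (2 : ℚ) ^ (n - i) *
        (stirling2 n i : ℚ) = 0) := by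
  rw [sum_stirling2_eq_factorial_mul_coeff_tanhS]
  refine ⟨fun _ => ?_, fun hn => ?_⟩
  · rw [tangentNumber, ThetaT, ← mul_assoc, ← pow_add, ← two_mul, (even_two_mul _).neg_one_pow]
    simp
  · rw [coeff_eq_zero_of_rescale_neg_one_eq_neg rescale_neg_one_tanhS hn, mul_zero]

/-- For odd n ≥ 1, ∑_{i=1}^{n} (-1)^{i-1} i! 2^{n-i} S(n,i) = (-1)^{(n-1)/2} T_n;
for even n ≥ 2 the same sum vanishes. -/
theorem lengyel_type_identity (n : ℕ) (hn : 1 ≤ n) :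
    (Odd n →
      ∑ i ∈ Finset.Icc 1 n, (-1 : ℚ) ^ (i - 1) * (i.factorial : ℚ) * (2 : ℚ) ^ (n - i) *
        (stirling2 n i : ℚ) = (-1 : ℚ) ^ ((n - 1) / 2) * tangentNumber n) ∧
    (Even n →
      ∑ i ∈ Finset.Icc 1 n, (-1 : ℚ) ^ (i - 1) * (i.factorial : ℚ) * (2 : ℚ) ^ (n - i) *
        (stirling2 n i : ℚ) = 0) :=
  lengyel_type_identity_general n
end

section
/- For all n ≥ 1: ∑_{i=1}^{n} i!·Θ(n,i) = 2^{n-1}, where Θ(n,i) are the tanh numbers defined by (1/i!)·tanh(u)^i = ∑_n Θ(n,i) u^n/n!. -/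
open PowerSeries Finset

/-!
Since `tanh` has no constant term, `∑_{i=1}^n n! [uⁿ] tanhⁱ` is `n!` times the `n`-th coefficient of
the full geometric series `1 / (1 - tanh u)`. From `1 - tanh u = 2e^{-u} / (e^u + e^{-u})` we get
`1 / (1 - tanh u) = (e^{2u} + 1) / 2`, whose `n`-th coefficient is `2^{n-1} / n!` for `n ≥ 1`.
-/

namespace PowerSeries

variable {R : Type*} [CommRing R]

theorem coeff_pow_mul_of_lt {f : R⟦X⟧} (hf : constantCoeff f = 0) (g : R⟦X⟧) {n k : ℕ}
    (hnk : n < k) : coeff n (f ^ k * g) = 0 :=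
  X_pow_dvd_iff.1 ((pow_dvd_pow_of_dvd (X_dvd_iff.2 hf) k).mul_right g) n hnk

/-- Truncating the geometric series `∑ fⁱ` at `i = n` does not change its `n`-th coefficient. -/
theorem coeff_sum_range_pow_of_one_sub_mul_eq_one {f g : R⟦X⟧} (hf : constantCoeff f = 0)
    (hg : (1 - f) * g = 1) (n : ℕ) :
    coeff n (∑ i ∈ range (n + 1), f ^ i) = coeff n g := by
  have hsum : ∑ i ∈ range (n + 1), f ^ i = g - f ^ (n + 1) * g := by
    calc ∑ i ∈ range (n + 1), f ^ i
        = (∑ i ∈ range (n + 1), f ^ i) * ((1 - f) * g) := by rw [hg, mul_one]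
      _ = (1 - f ^ (n + 1)) * g := by rw [← mul_assoc, geom_sum_mul_neg]
      _ = g - f ^ (n + 1) * g := by ring
  rw [hsum, map_sub, coeff_pow_mul_of_lt hf g n.lt_succ_self, sub_zero]

@[simp]
theorem constantCoeff_rescale_exp [Algebra ℚ R] (a : R) : constantCoeff (rescale a (exp R)) = 1 := by
  rw [← coeff_zero_eq_constantCoeff_apply, coeff_rescale, coeff_zero_eq_constantCoeff_apply]
  simp

end PowerSeries

theorem constantCoeff_tanhS : constantCoeff tanhS = 0 := by
  simp [tanhS]

/-- `1 / (1 - tanh u) = (e^{2u} + 1) / 2`. -/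
theorem one_sub_tanhS_mul : (1 - tanhS) * (C (2⁻¹ : ℚ) * (rescale 2 (exp ℚ) + 1)) = 1 := by
  set E := exp ℚ
  set F := rescale (-1 : ℚ) E
  have hB : (E + F) * (E + F)⁻¹ = 1 :=
    PowerSeries.mul_inv_cancel _ (by norm_num [E, F])
  have hFE : F * rescale 2 E = E := by
    rw [exp_mul_exp_eq_exp_add]; norm_num [E]
  have h2 : C (2⁻¹ : ℚ) * 2 = 1 := by
    rw [show (2 : ℚ⟦X⟧) = C 2 from (map_ofNat C 2).symm, ← map_mul]; norm_num
  calc (1 - tanhS) * (C 2⁻¹ * (rescale 2 E + 1))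
      = ((E + F) * (E + F)⁻¹ - (E - F) * (E + F)⁻¹) * (C 2⁻¹ * (rescale 2 E + 1)) := by
        rw [hB, tanhS]
    _ = (C 2⁻¹ * 2) * ((F * rescale 2 E + F) * (E + F)⁻¹) := by ring
    _ = 1 := by rw [h2, hFE, one_mul, hB]

theorem factorial_mul_coeff_half_exp_two_add_one {n : ℕ} (hn : 1 ≤ n) :
    (n.factorial : ℚ) * coeff n (C (2⁻¹ : ℚ) * (rescale 2 (exp ℚ) + 1)) = 2 ^ (n - 1) := by
  obtain ⟨m, rfl⟩ := Nat.exists_eq_add_of_le' hn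
  rw [coeff_C_mul, map_add, coeff_rescale, coeff_exp, coeff_one, if_neg m.succ_ne_zero,
    Algebra.algebraMap_self_apply, add_zero, add_tsub_cancel_right, pow_succ]
  field_simp

theorem factorial_mul_ThetaT (n i : ℕ) :
    (i.factorial : ℚ) * ThetaT n i = n.factorial * coeff n (tanhS ^ i) := by
  rw [ThetaT]
  field_simp

/-- ∑_{i=1}^{n} i! Θ(n,i) = 2^{n-1} for all n ≥ 1. -/
theorem sum_factorial_tanh_numbers (n : ℕ) (hn : 1 ≤ n) :
    ∑ i ∈ Finset.Icc 1 n, (i.factorial : ℚ) * ThetaT n i = (2 : ℚ) ^ (n - 1) := by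
  have hrange : ∑ i ∈ range (n + 1), tanhS ^ i = 1 + ∑ i ∈ Icc 1 n, tanhS ^ i := by
    rw [range_eq_Ico, sum_eq_sum_Ico_succ_bot n.succ_pos, pow_zero]; rfl
  have hcoeff := coeff_sum_range_pow_of_one_sub_mul_eq_one constantCoeff_tanhS one_sub_tanhS_mul n
  rw [hrange, map_add, coeff_one, if_neg (by omega), zero_add] at hcoeff
  simp_rw [factorial_mul_ThetaT, ← mul_sum, ← map_sum, hcoeff]
  exact factorial_mul_coeff_half_exp_two_add_one hn
end
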